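/- arXiv:1809.06597 — 2 statements merged into one kernel-verified Lean document; each statement's English description precedes it below -/
import Mathlib

section
/- Let T be a Hom-finite Krull-Schmidt k-linear category, X an object, and H = Hom(X,-) : T → mod End(X)^op. For a morphism f : R₁ → R₂ between objects R₁, R₂ in add(X), H(f) is right minimal if and only if f is right minimal (modulo the ideal of morphisms killed by H). In particular, by Yoneda, any endomorphism α of H(R₁) is of the form H(r) for some r : R₁ → R₁, and H(f)∘α = H(f) with f right minimal forces α to be an isomorphism. -/
open CategoryTheory CategoryTheory.Limits

lemma aux_repr {T : Type*} [Category T] [Preadditive T] [HasFiniteBiproducts T]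
    {X R₁ : T}
    (h₁ : ∃ (n : ℕ) (s : R₁ ⟶ ⨁ (fun _ : Fin n => X)) (r : (⨁ (fun _ : Fin n => X)) ⟶ R₁),
      s ≫ r = 𝟙 R₁)
    (α : (X ⟶ R₁) → (X ⟶ R₁))
    (hlin : ∀ (e : X ⟶ X) (φ : X ⟶ R₁), α (e ≫ φ) = e ≫ α φ)
    (hadd : ∀ φ ψ : X ⟶ R₁, α (φ + ψ) = α φ + α ψ) :
    ∃ r : R₁ ⟶ R₁, ∀ φ : X ⟶ R₁, α φ = φ ≫ r := by
  obtain ⟨n, s, r', hsr⟩ := h₁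
  refine ⟨s ≫ ∑ i : Fin n, biproduct.π (fun _ : Fin n => X) i ≫ α (biproduct.ι (fun _ : Fin n => X) i ≫ r'), ?_⟩
  intro φ
  set A : (X ⟶ R₁) →+ (X ⟶ R₁) := AddMonoidHom.mk' α (fun a b => hadd a b) with hA
  have hφ : ∑ i : Fin n, (φ ≫ s ≫ biproduct.π (fun _ : Fin n => X) i) ≫ (biproduct.ι (fun _ : Fin n => X) i ≫ r') = φ := by
    have h2 : s ≫ (∑ i : Fin n, biproduct.π (fun _ : Fin n => X) i ≫ biproduct.ι (fun _ : Fin n => X) i) ≫ r' = 𝟙 R₁ := by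
      rw [biproduct.total, Category.id_comp, hsr]
    calc ∑ i : Fin n, (φ ≫ s ≫ biproduct.π (fun _ : Fin n => X) i) ≫ (biproduct.ι (fun _ : Fin n => X) i ≫ r')
        = φ ≫ s ≫ (∑ i : Fin n, biproduct.π (fun _ : Fin n => X) i ≫ biproduct.ι (fun _ : Fin n => X) i) ≫ r' := by
          simp only [Preadditive.sum_comp, Preadditive.comp_sum, Category.assoc]
      _ = φ := by rw [h2, Category.comp_id]
  calc α φ = A (∑ i : Fin n, (φ ≫ s ≫ biproduct.π (fun _ : Fin n => X) i) ≫ (biproduct.ι (fun _ : Fin n => X) i ≫ r')) := by rw [hφ]; rfl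
    _ = ∑ i : Fin n, A ((φ ≫ s ≫ biproduct.π (fun _ : Fin n => X) i) ≫ (biproduct.ι (fun _ : Fin n => X) i ≫ r')) :=
        map_sum A _ _
    _ = ∑ i : Fin n, (φ ≫ s ≫ biproduct.π (fun _ : Fin n => X) i) ≫ α (biproduct.ι (fun _ : Fin n => X) i ≫ r') :=
        Finset.sum_congr rfl fun i _ => hlin _ _
    _ = φ ≫ s ≫ ∑ i : Fin n, biproduct.π (fun _ : Fin n => X) i ≫ α (biproduct.ι (fun _ : Fin n => X) i ≫ r') := by
        simp [Preadditive.comp_sum, Category.assoc]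

theorem stmt_6 (k : Type*) [Field k] {T : Type*} [Category T] [Preadditive T] [Linear k T]
    [HasFiniteBiproducts T] [IsIdempotentComplete T]
    (hfin : ∀ X Y : T, FiniteDimensional k (X ⟶ Y))
    (X R₁ R₂ : T)
    (h₁ : ∃ (n : ℕ) (s : R₁ ⟶ ⨁ (fun _ : Fin n => X)) (r : (⨁ (fun _ : Fin n => X)) ⟶ R₁),
      s ≫ r = 𝟙 R₁)
    (h₂ : ∃ (n : ℕ) (s : R₂ ⟶ ⨁ (fun _ : Fin n => X)) (r : (⨁ (fun _ : Fin n => X)) ⟶ R₂),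
      s ≫ r = 𝟙 R₂)
    (f : R₁ ⟶ R₂) :
    (∀ α : (X ⟶ R₁) → (X ⟶ R₁),
      (∀ (e : X ⟶ X) (φ : X ⟶ R₁), α (e ≫ φ) = e ≫ α φ) →
      (∀ φ ψ : X ⟶ R₁, α (φ + ψ) = α φ + α ψ) →
      ∃ r : R₁ ⟶ R₁, ∀ φ : X ⟶ R₁, α φ = φ ≫ r) ∧
    ((∀ α : (X ⟶ R₁) → (X ⟶ R₁),
        (∀ (e : X ⟶ X) (φ : X ⟶ R₁), α (e ≫ φ) = e ≫ α φ) →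
        (∀ φ ψ : X ⟶ R₁, α (φ + ψ) = α φ + α ψ) →
        (∀ φ : X ⟶ R₁, α φ ≫ f = φ ≫ f) → Function.Bijective α)
      ↔
      (∀ r : R₁ ⟶ R₁, (∀ φ : X ⟶ R₁, φ ≫ r ≫ f = φ ≫ f) →
        ∃ s : R₁ ⟶ R₁, (∀ φ : X ⟶ R₁, φ ≫ r ≫ s = φ) ∧ (∀ φ : X ⟶ R₁, φ ≫ s ≫ r = φ))) := by
  constructor
  · exact fun α hlin hadd => aux_repr h₁ α hlin hadd
  constructor
  · -- H(f) right minimal → f right minimal mod ker H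
    intro hmin r hr
    set α : (X ⟶ R₁) → (X ⟶ R₁) := fun φ => φ ≫ r with hα
    have hbij : Function.Bijective α := by
      refine hmin α (fun e φ => by simp [hα, Category.assoc])
        (fun φ ψ => by simp [hα, Preadditive.add_comp])
        (fun φ => by simpa [hα, Category.assoc] using hr φ)
    -- the inverse is also linear and additive
    obtain ⟨β, hβ₁, hβ₂⟩ := Function.bijective_iff_has_inverse.mp hbij
    have hβlin : ∀ (e : X ⟶ X) (φ : X ⟶ R₁), β (e ≫ φ) = e ≫ β φ := by
      intro e φ
      apply hbij.injective
      rw [hβ₂]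
      have : α (e ≫ β φ) = e ≫ α (β φ) := by simp [hα, Category.assoc]
      rw [this, hβ₂]
    have hβadd : ∀ φ ψ : X ⟶ R₁, β (φ + ψ) = β φ + β ψ := by
      intro φ ψ
      apply hbij.injective
      rw [hβ₂]
      have : α (β φ + β ψ) = α (β φ) + α (β ψ) := by simp [hα, Preadditive.add_comp]
      rw [this, hβ₂, hβ₂]
    obtain ⟨t, ht⟩ := aux_repr h₁ β hβlin hβadd
    refine ⟨t, fun φ => ?_, fun φ => ?_⟩
    · have := hβ₁ φ
      rw [ht] at this
      simpa [hα, Category.assoc] using this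
    · have := hβ₂ φ
      rw [ht (φ)] at this  -- β φ = φ ≫ t ; α (φ ≫ t) = φ
      have h2 : α (β φ) = φ := hβ₂ φ
      rw [ht φ] at h2
      simpa [hα, Category.assoc] using h2
  · -- f right minimal mod ker H → H(f) right minimal
    intro hmin α hlin hadd hαf
    obtain ⟨r, hrα⟩ := aux_repr h₁ α hlin hadd
    have hr : ∀ φ : X ⟶ R₁, φ ≫ r ≫ f = φ ≫ f := by
      intro φ
      have := hαf φ
      rw [hrα φ] at this
      simpa [Category.assoc] using this
    obtain ⟨s, hs₁, hs₂⟩ := hmin r hr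
    refine Function.bijective_iff_has_inverse.mpr ⟨fun φ => φ ≫ s, ?_, ?_⟩
    · intro φ
      rw [hrα φ]
      simpa [Category.assoc] using hs₁ φ
    · intro φ
      rw [hrα (φ ≫ s)]
      simpa [Category.assoc] using hs₂ φ
end

section
/- Let B be an exact category with enough projectives, T a contravariantly finite subcategory with P ⊆ T and Ext¹(T,P) = 0, and H = Hom_{B/P}(ΩT, -). Suppose given conflations R₂ → A ⊕ P → T₁ and R₁ → R₂ ⊕ P' → A arising from a commutative diagram where R₁, R₂ ∈ ΩT, T₁, T₂ ∈ T, P projective, with maps f : R₁ → R₂, g : R₂ → A, h : A → T₁. Then applying H yields an exact sequence H(R₁) → H(R₂) → H(A) → H(T₁) in mod(stab ΩT). -/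
open CategoryTheory CategoryTheory.Limits

universe v u

/-- A lightweight axiomatization of an exact (more generally, extriangulated) category:
a distinguished class of "conflations" (kernel–cokernel–like pairs `X ↣ Y ↠ Z`), such that
the inflation is a weak kernel of the deflation and vice versa, split sequences are
conflations, and conflations can be pushed forward along morphisms out of `X` and pulled
back along morphisms into `Z`.  All of these properties hold for `𝔼`-triangles in any
extriangulated category, in particular in any exact category and any triangulated category. -/
class ConflationCat (C : Type u) [Category.{v} C] [Preadditive C] [HasBinaryBiproducts C] where
  IsConflation : ∀ ⦃X Y Z : C⦄, (X ⟶ Y) → (Y ⟶ Z) → Prop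
  comp_zero : ∀ {X Y Z : C} {i : X ⟶ Y} {p : Y ⟶ Z}, IsConflation i p → i ≫ p = 0
  weakKernel : ∀ {X Y Z W : C} {i : X ⟶ Y} {p : Y ⟶ Z}, IsConflation i p →
    ∀ f : W ⟶ Y, f ≫ p = 0 → ∃ g : W ⟶ X, g ≫ i = f
  weakCokernel : ∀ {X Y Z W : C} {i : X ⟶ Y} {p : Y ⟶ Z}, IsConflation i p →
    ∀ f : Y ⟶ W, i ≫ f = 0 → ∃ g : Z ⟶ W, p ≫ g = f
  split_conflation : ∀ X Y : C,
    IsConflation (biprod.inl : X ⟶ X ⊞ Y) (biprod.snd : X ⊞ Y ⟶ Y)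
  pushout_conflation : ∀ {X Y Z X' : C} {i : X ⟶ Y} {p : Y ⟶ Z}, IsConflation i p →
    ∀ f : X ⟶ X', ∃ (Y' : C) (i' : X' ⟶ Y') (p' : Y' ⟶ Z) (g : Y ⟶ Y'),
      IsConflation i' p' ∧ i ≫ g = f ≫ i' ∧ p = g ≫ p'
  pullback_conflation : ∀ {X Y Z Z' : C} {i : X ⟶ Y} {p : Y ⟶ Z}, IsConflation i p →
    ∀ f : Z' ⟶ Z, ∃ (Y' : C) (i' : X ⟶ Y') (p' : Y' ⟶ Z') (g : Y' ⟶ Y),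
      IsConflation i' p' ∧ i' ≫ g = i ∧ p' ≫ f = g ≫ p

namespace ConflationCat

variable (C : Type u) [Category.{v} C] [Preadditive C] [HasBinaryBiproducts C] [ConflationCat C]

/-- `P` is projective: morphisms out of `P` lift along deflations. -/
def Proj (P : C) : Prop :=
  ∀ ⦃X Y Z : C⦄ (i : X ⟶ Y) (p : Y ⟶ Z), IsConflation i p → ∀ f : P ⟶ Z, ∃ g : P ⟶ Y, g ≫ p = f

/-- `I` is injective: morphisms into `I` extend along inflations. -/
def Inj (I : C) : Prop :=
  ∀ ⦃X Y Z : C⦄ (i : X ⟶ Y) (p : Y ⟶ Z), IsConflation i p → ∀ f : X ⟶ I, ∃ g : Y ⟶ I, i ≫ g = f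

/-- `C` has enough projectives. -/
def EnoughProj : Prop :=
  ∀ A : C, ∃ (K P : C) (i : K ⟶ P) (p : P ⟶ A), Proj C P ∧ IsConflation i p

/-- `C` has enough injectives. -/
def EnoughInj : Prop :=
  ∀ A : C, ∃ (I Z : C) (i : A ⟶ I) (p : I ⟶ Z), Inj C I ∧ IsConflation i p

/-- Two morphisms are equal in the projectively stable category `C/𝒫`. -/
def stEq {X Y : C} (f g : X ⟶ Y) : Prop :=
  ∃ (P : C) (u : X ⟶ P) (v : P ⟶ Y), Proj C P ∧ f - g = u ≫ v

/-- Two morphisms are equal in the injectively stable category `C/ℐ`. -/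
def stEqI {X Y : C} (f g : X ⟶ Y) : Prop :=
  ∃ (I : C) (u : X ⟶ I) (v : I ⟶ Y), Inj C I ∧ f - g = u ≫ v

/-- `X ∈ Ω𝒯 = CoCone(𝒫,𝒯)`: there is a conflation `X → P → T` with `P` projective, `T ∈ 𝒯`. -/
def OmegaT (𝒯 : C → Prop) (X : C) : Prop :=
  ∃ (P T : C) (i : X ⟶ P) (p : P ⟶ T), Proj C P ∧ 𝒯 T ∧ IsConflation i p

/-- `X ∈ Σ𝒯 = Cone(𝒯,ℐ)`: there is a conflation `T → I → X` with `I` injective, `T ∈ 𝒯`. -/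
def SigmaT (𝒯 : C → Prop) (X : C) : Prop :=
  ∃ (T I : C) (i : T ⟶ I) (p : I ⟶ X), Inj C I ∧ 𝒯 T ∧ IsConflation i p

/-- `Ext¹(Z, A) = 0`: every conflation `A → E → Z` splits. -/
def Ext1Zero (Z A : C) : Prop :=
  ∀ ⦃E : C⦄ (i : A ⟶ E) (p : E ⟶ Z), IsConflation i p → ∃ s : Z ⟶ E, s ≫ p = 𝟙 Z

/-- `Y` is a direct summand of `X`. -/
def IsSummand (Y X : C) : Prop := ∃ (s : Y ⟶ X) (r : X ⟶ Y), s ≫ r = 𝟙 Y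

/-- `X` is indecomposable. -/
def Indec (X : C) : Prop :=
  ¬ IsZero X ∧ ∀ Y Z : C, Nonempty (X ≅ Y ⊞ Z) → IsZero Y ∨ IsZero Z

/-- `𝒯` is contravariantly finite: every object has a right `𝒯`-approximation. -/
def ContraFinite (𝒯 : C → Prop) : Prop :=
  ∀ A : C, ∃ (T : C) (r : T ⟶ A), 𝒯 T ∧
    ∀ T' : C, 𝒯 T' → ∀ t : T' ⟶ A, ∃ s : T' ⟶ T, s ≫ r = t

/-- `𝒯` is covariantly finite: every object has a left `𝒯`-approximation. -/
def CovFinite (𝒯 : C → Prop) : Prop :=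
  ∀ A : C, ∃ (T : C) (l : A ⟶ T), 𝒯 T ∧
    ∀ T' : C, 𝒯 T' → ∀ t : A ⟶ T', ∃ s : T ⟶ T', l ≫ s = t

/-- `𝒯` is an additive subcategory: closed under direct sums and direct summands. -/
def AddClosed (𝒯 : C → Prop) : Prop :=
  (∀ X Y : C, 𝒯 X → 𝒯 Y → 𝒯 (X ⊞ Y)) ∧ (∀ X Y : C, 𝒯 Y → IsSummand C X Y → 𝒯 X)

/-- `X ∈ 𝒦 = Ker Hom_{C/𝒫}(Ω𝒯, -)`: every morphism from an object of `Ω𝒯` to `X`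
factors through a projective. -/
def KK (𝒯 : C → Prop) (X : C) : Prop :=
  ∀ R : C, OmegaT C 𝒯 R → ∀ t : R ⟶ X, stEq C t 0

/-- `H(h) = 0`, where `H = Hom_{C/𝒫}(Ω𝒯, -)`. -/
def Hzero (𝒯 : C → Prop) {A B : C} (h : A ⟶ B) : Prop :=
  ∀ R : C, OmegaT C 𝒯 R → ∀ t : R ⟶ A, stEq C (t ≫ h) 0

/-- `f` is right minimal in the projectively stable category `C/𝒫`. -/
def StRightMinimal {X Y : C} (f : X ⟶ Y) : Prop :=
  ∀ r : X ⟶ X, stEq C (r ≫ f) f →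
    ∃ s : X ⟶ X, stEq C (r ≫ s) (𝟙 X) ∧ stEq C (s ≫ r) (𝟙 X)

/-- `p` is a deflation. -/
def IsDeflation {Y Z : C} (p : Y ⟶ Z) : Prop := ∃ (X : C) (i : X ⟶ Y), IsConflation i p

/-- `i` is an inflation. -/
def IsInflation {X Y : C} (i : X ⟶ Y) : Prop := ∃ (Z : C) (p : Y ⟶ Z), IsConflation i p

/-- Condition (WIC). -/
def WIC : Prop :=
  (∀ {X Y Z : C} (f : X ⟶ Y) (g : Y ⟶ Z), IsDeflation C (f ≫ g) → IsDeflation C g) ∧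
  (∀ {X Y Z : C} (f : X ⟶ Y) (g : Y ⟶ Z), IsInflation C (f ≫ g) → IsInflation C f)

/-- `K ∈ 𝒦̃`: `K ∈ 𝒦` and `K` has no nonzero direct summand in `𝒯`. -/
def Ktilde (𝒯 : C → Prop) (X : C) : Prop :=
  KK C 𝒯 X ∧ ∀ Y : C, IsSummand C Y X → 𝒯 Y → IsZero Y

/-- `X ∈ ℋ`: every indecomposable direct summand of `X` is either not in `𝒦` or in `𝒯`
(the additive closure of the indecomposables outside `𝒦` together with `𝒯`). -/
def Hcat (𝒯 : C → Prop) (X : C) : Prop :=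
  ∀ Y : C, IsSummand C Y X → Indec C Y → (¬ KK C 𝒯 Y ∨ 𝒯 Y)

/-- `X ∈ 𝒦̂`: every indecomposable direct summand of `X` is in `𝒦̃` or projective-injective
(the additive closure of `𝒦̃` and `𝒫 ∩ ℐ`). -/
def Khat (𝒯 : C → Prop) (X : C) : Prop :=
  ∀ Y : C, IsSummand C Y X → Indec C Y → (Ktilde C 𝒯 Y ∨ (Proj C Y ∧ Inj C Y))

/-- `H = Hom_{C/𝒫}(Ω𝒯, -) : C → mod (Ω𝒯/𝒫)` is a quotient functor, i.e. dense and full,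
expressed elementwise:
(density) every finitely presented functor — i.e. the cokernel of `H(f)` for a morphism
`f : R₁ ⟶ R₂` of `Ω𝒯` — is isomorphic to `H(A)` for some object `A`, via some
`g : R₂ ⟶ A` making `H(R₁) → H(R₂) → H(A) → 0` exact;
(fullness) every natural `End`-semilinear family `α : Hom_{C/𝒫}(R, A) → Hom_{C/𝒫}(R, B)`
(`R ∈ Ω𝒯`), i.e. every morphism `H(A) ⟶ H(B)`, is induced by a morphism `A ⟶ B`. -/
def HQuot (𝒯 : C → Prop) : Prop :=
  (∀ R₁ R₂ : C, OmegaT C 𝒯 R₁ → OmegaT C 𝒯 R₂ → ∀ f : R₁ ⟶ R₂,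
     ∃ (A : C) (g : R₂ ⟶ A), stEq C (f ≫ g) 0 ∧
       (∀ R : C, OmegaT C 𝒯 R → ∀ t : R ⟶ A, ∃ s : R ⟶ R₂, stEq C (s ≫ g) t) ∧
       (∀ R : C, OmegaT C 𝒯 R → ∀ s : R ⟶ R₂, stEq C (s ≫ g) 0 →
         ∃ u : R ⟶ R₁, stEq C (u ≫ f) s))
  ∧ (∀ (A B : C) (α : ∀ R : C, OmegaT C 𝒯 R → (R ⟶ A) → (R ⟶ B)),
      (∀ (R : C) (hR : OmegaT C 𝒯 R) (t t' : R ⟶ A),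
        stEq C (α R hR (t + t')) (α R hR t + α R hR t')) →
      (∀ (R R' : C) (hR : OmegaT C 𝒯 R) (hR' : OmegaT C 𝒯 R') (r : R' ⟶ R) (t : R ⟶ A),
        stEq C (α R' hR' (r ≫ t)) (r ≫ α R hR t)) →
      (∀ (R : C) (hR : OmegaT C 𝒯 R) (t t' : R ⟶ A),
        stEq C t t' → stEq C (α R hR t) (α R hR t')) →
      ∃ f : A ⟶ B, ∀ (R : C) (hR : OmegaT C 𝒯 R) (t : R ⟶ A), stEq C (α R hR t) (t ≫ f))

/-- `H^op = Hom_{C/ℐ}(-, Σ𝒯)` is a quotient functor (dense and full), expressed elementwise,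
dually to `HQuot`. -/
def HopQuot (𝒯 : C → Prop) : Prop :=
  (∀ S₁ S₂ : C, SigmaT C 𝒯 S₁ → SigmaT C 𝒯 S₂ → ∀ f : S₁ ⟶ S₂,
     ∃ (A : C) (g : A ⟶ S₁), stEqI C (g ≫ f) 0 ∧
       (∀ S : C, SigmaT C 𝒯 S → ∀ t : A ⟶ S, ∃ s : S₁ ⟶ S, stEqI C (g ≫ s) t) ∧
       (∀ S : C, SigmaT C 𝒯 S → ∀ s : S₁ ⟶ S, stEqI C (g ≫ s) 0 →
         ∃ u : S₂ ⟶ S, stEqI C (f ≫ u) s))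
  ∧ (∀ (A B : C) (α : ∀ S : C, SigmaT C 𝒯 S → (B ⟶ S) → (A ⟶ S)),
      (∀ (S : C) (hS : SigmaT C 𝒯 S) (t t' : B ⟶ S),
        stEqI C (α S hS (t + t')) (α S hS t + α S hS t')) →
      (∀ (S S' : C) (hS : SigmaT C 𝒯 S) (hS' : SigmaT C 𝒯 S') (r : S ⟶ S') (t : B ⟶ S),
        stEqI C (α S' hS' (t ≫ r)) (α S hS t ≫ r)) →
      (∀ (S : C) (hS : SigmaT C 𝒯 S) (t t' : B ⟶ S),
        stEqI C t t' → stEqI C (α S hS t) (α S hS t')) →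
      ∃ f : A ⟶ B, ∀ (S : C) (hS : SigmaT C 𝒯 S) (t : B ⟶ S), stEqI C (α S hS t) (f ≫ t))

end ConflationCat

open ConflationCat

/-- In the setting of the paper, given the commutative diagram producing the
conflations `R₂ → A ⊞ P → T₁` (with components `(g, -q)` and `(h, p)`) and
`R₁ → R₂ ⊞ P' → A` (with components `(f, q')` and `(g, p')`), where `R₁, R₂ ∈ Ω𝒯`,
`T₁, T₂ ∈ 𝒯` and `P, P'` are projective, the functor `H = Hom_{B/𝒫}(Ω𝒯, -)` yields an
exact sequence `H(R₁) → H(R₂) → H(A) → H(T₁)` in `mod(Ω𝒯/𝒫)`, i.e. the composites vanish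
in the stable category and, for each `R ∈ Ω𝒯`, kernels agree with images elementwise. -/
theorem stmt_8 {C : Type u} [Category.{v} C] [Preadditive C] [HasBinaryBiproducts C]
    [ConflationCat C]
    (hEP : EnoughProj C) (hEI : EnoughInj C)
    (𝒯 : C → Prop) (hAdd : AddClosed C 𝒯)
    (hPT : ∀ P : C, Proj C P → 𝒯 P)
    (hExt : ∀ T P : C, 𝒯 T → Proj C P → Ext1Zero C T P)
    (hcf : ContraFinite C 𝒯)
    {R₁ R₂ A T₁ T₂ P P' : C}
    (hR₁ : OmegaT C 𝒯 R₁) (hR₂ : OmegaT C 𝒯 R₂)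
    (hT₁ : 𝒯 T₁) (hT₂ : 𝒯 T₂) (hP : Proj C P) (hP' : Proj C P')
    (f : R₁ ⟶ R₂) (g : R₂ ⟶ A) (h : A ⟶ T₁)
    (q : R₂ ⟶ P) (p : P ⟶ T₁) (q' : R₁ ⟶ P') (p' : P' ⟶ A)
    (hc₁ : IsConflation (biprod.lift g q) (biprod.desc h p))
    (hc₂ : IsConflation (biprod.lift f q') (biprod.desc g p')) :
    stEq C (f ≫ g) 0 ∧ stEq C (g ≫ h) 0 ∧
    (∀ R : C, OmegaT C 𝒯 R → ∀ t : R ⟶ R₂, stEq C (t ≫ g) 0 →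
      ∃ s : R ⟶ R₁, stEq C (s ≫ f) t) ∧
    (∀ R : C, OmegaT C 𝒯 R → ∀ t : R ⟶ A, stEq C (t ≫ h) 0 →
      ∃ s : R ⟶ R₂, stEq C (s ≫ g) t) := by

  have e2 : f ≫ g + q' ≫ p' = 0 := by
    rw [← biprod.lift_desc]; exact ConflationCat.comp_zero hc₂
  have e1 : g ≫ h + q ≫ p = 0 := by
    rw [← biprod.lift_desc]; exact ConflationCat.comp_zero hc₁
  refine ⟨⟨P', q', -p', hP', ?_⟩, ⟨P, q, -p, hP, ?_⟩, ?_, ?_⟩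
  · rw [Preadditive.comp_neg, sub_zero, eq_neg_of_add_eq_zero_left e2]
  · rw [Preadditive.comp_neg, sub_zero, eq_neg_of_add_eq_zero_left e1]
  · rintro R _ t ⟨Q, u, v, hQ, he⟩
    rw [sub_zero] at he
    obtain ⟨w, hw⟩ := hQ _ _ hc₂ v
    have hm : (biprod.lift t 0 - u ≫ w) ≫ biprod.desc g p' = 0 := by
      rw [Preadditive.sub_comp, Category.assoc, hw, biprod.lift_desc, zero_comp,
        add_zero, he, sub_self]
    obtain ⟨s, hs⟩ := ConflationCat.weakKernel hc₂ _ hm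
    refine ⟨s, Q, u, -(w ≫ biprod.fst), hQ, ?_⟩
    have := congrArg (· ≫ (biprod.fst : R₂ ⊞ P' ⟶ R₂)) hs
    simp only [Category.assoc, biprod.lift_fst, Preadditive.sub_comp] at this
    rw [Preadditive.comp_neg]
    rw [this]; abel
  · rintro R _ t ⟨Q, u, v, hQ, he⟩
    rw [sub_zero] at he
    obtain ⟨w, hw⟩ := hQ _ _ hc₁ v
    have hm : (biprod.lift t 0 - u ≫ w) ≫ biprod.desc h p = 0 := by
      rw [Preadditive.sub_comp, Category.assoc, hw, biprod.lift_desc, zero_comp,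
        add_zero, he, sub_self]
    obtain ⟨s, hs⟩ := ConflationCat.weakKernel hc₁ _ hm
    refine ⟨s, Q, u, -(w ≫ biprod.fst), hQ, ?_⟩
    have := congrArg (· ≫ (biprod.fst : A ⊞ P ⟶ A)) hs
    simp only [Category.assoc, biprod.lift_fst, Preadditive.sub_comp] at this
    rw [Preadditive.comp_neg]
    rw [this]; abel
end
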